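/- arXiv:1902.09573 — 3 statements merged into one kernel-verified Lean document; each statement's English description precedes it below -/
import Mathlib

section
/- Let G be a Borel graph with degrees at most D on a standard Borel space I. Then there exists a metric d₀ on I generating the given Borel σ-algebra such that (I, d₀) is a compact metric space, d₀ has diameter at most 1, and d₀(x,y) = 1 for every edge xy of G. -/
open MeasureTheory

/-- The ball of graph radius `r` around `x` in the graph `G` (as a vertex set,
including `x` itself). -/
def gball {I : Type*} (G : I → I → Prop) (x : I) : ℕ → Set I
  | 0 => {x}
  | r + 1 => gball G x r ∪ {z | ∃ w ∈ gball G x r, G w z}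

/-- An `r`-neighborhood isomorphism between `x` and `y`: a rooted isomorphism of the
graph balls `B(x,r) → B(y,r)` sending `x` to `y` (encoded as a global map that is a
bijection between the balls preserving adjacency in both directions). -/
def IsNbhdIso {I : Type*} (G : I → I → Prop) (r : ℕ) (x y : I) (φ : I → I) : Prop :=
  φ x = y ∧ Set.BijOn φ (gball G x r) (gball G y r) ∧
    ∀ u ∈ gball G x r, ∀ v ∈ gball G x r, (G u v ↔ G (φ u) (φ v))

/-- The displacement `d₀(φ) = sup_{z ∈ B(x,r)} d₀(z, φ(z))` of a neighborhood map. -/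
noncomputable def disp {I : Type*} [MetricSpace I] (G : I → I → Prop) (x : I) (r : ℕ)
    (φ : I → I) : ℝ :=
  ⨆ z : gball G x r, dist (z : I) (φ z)

/-- The neighborhood-isomorphism metric
`d(x,y) = inf over r and r-neighborhood isomorphisms φ of max {1/(r+1), d₀(φ)}`. -/
noncomputable def nbhdDist {I : Type*} [MetricSpace I] (G : I → I → Prop) (x y : I) : ℝ :=
  sInf {m | ∃ (r : ℕ) (φ : I → I), IsNbhdIso G r x y φ ∧
    m = max (1 / ((r : ℝ) + 1)) (disp G x r φ)}

/-- `degIn G B x` is the number of neighbors of `x` in `B`. -/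
noncomputable def degIn {I : Type*} (G : I → I → Prop) (B : Set I) (x : I) : ℕ :=
  {y | y ∈ B ∧ G x y}.ncard

/-- The vertex set of the connected component of `x`. -/
def compSet {I : Type*} (G : I → I → Prop) (x : I) : Set I := {y | Relation.ReflTransGen G x y}

/-!
By Kechris–Solecki–Todorcevic, a Borel graph of degree at most `D` has a Borel proper
`(D + 1)`-colouring `c`: first colour properly with countably many colours, sending `x` to the
first basic open set of a Polish topology that contains `x` but none of its neighbours, then
recolour greedily along that colouring. Every step is Borel because a Borel set with uniformly
finite sections has a Borel projection (Lusin–Souslin, applied to the increasing enumerations of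
the sections, by downward induction on their size).

Each colour class is Borel isomorphic to a compact subset of `[0, 1]`: the Cantor set if it is
uncountable, a subset of `{0} ∪ {1/(n+1)}` otherwise. Sending `x` to `(e_{c x}, f x)` in
`ℝ^(D+1) × ℝ` with the sup metric, where `f` is that isomorphism on each class, gives a compact
metric of diameter at most `1` in which differently coloured points are at distance exactly `1`.
-/

open Set Function

theorem Set.Finite.le_ncard_iff_exists_strictMono {α : Type*} [LinearOrder α] {s : Set α}
    (hs : s.Finite) (k : ℕ) : k ≤ s.ncard ↔ ∃ y : Fin k → α, StrictMono y ∧ ∀ i, y i ∈ s := by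
  constructor
  · intro hk
    rw [ncard_eq_toFinset_card _ hs] at hk
    obtain ⟨t, hts, htk⟩ := Finset.exists_subset_card_eq hk
    exact ⟨t.orderEmbOfFin htk, (t.orderEmbOfFin htk).strictMono,
      fun i => hs.mem_toFinset.1 (hts (t.orderEmbOfFin_mem htk i))⟩
  · rintro ⟨y, hy, hys⟩
    calc k = (range y).ncard := by rw [ncard_range_of_injective hy.injective, Nat.card_fin]
      _ ≤ s.ncard := ncard_le_ncard (range_subset_iff.2 hys) hs

theorem Set.Finite.strictMono_eq_of_ncard_eq {α : Type*} [LinearOrder α] {s : Set α}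
    (hs : s.Finite) {k : ℕ} (hk : s.ncard = k) {y z : Fin k → α} (hy : StrictMono y)
    (hz : StrictMono z) (hys : ∀ i, y i ∈ s) (hzs : ∀ i, z i ∈ s) : y = z := by
  have hrange : ∀ w : Fin k → α, StrictMono w → (∀ i, w i ∈ s) → range w = s := fun w hw hws =>
    eq_of_subset_of_ncard_le (range_subset_iff.2 hws)
      (by rw [hk, ncard_range_of_injective hw.injective, Nat.card_fin]) hs
  exact hy.range_inj hz |>.1 ((hrange y hy hys).trans (hrange z hz hzs).symm)

section SectionCount

variable {X : Type*} [MeasurableSpace X] [StandardBorelSpace X]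

theorem measurableSet_setOf_le_ncard_of_succ {S : Set (X × ℝ)} (hS : MeasurableSet S)
    (hfin : ∀ x, {t | (x, t) ∈ S}.Finite) {k : ℕ}
    (hk : MeasurableSet {x | k + 1 ≤ {t | (x, t) ∈ S}.ncard}) :
    MeasurableSet {x | k ≤ {t | (x, t) ∈ S}.ncard} := by
  let E : Set (X × (Fin k → ℝ)) := {p | StrictMono p.2} ∩
    ((⋂ i, {p | (p.1, p.2 i) ∈ S}) ∩ Prod.fst ⁻¹' {x | k + 1 ≤ {t | (x, t) ∈ S}.ncard}ᶜ)
  have hE : MeasurableSet E := by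
    refine .inter ?_ (.inter (.iInter fun i => hS.preimage (by fun_prop))
      (hk.compl.preimage measurable_fst))
    simp only [StrictMono, ofPred_forall]
    exact .iInter fun i => .iInter fun j => .iInter fun _ =>
      measurableSet_lt (by fun_prop) (by fun_prop)
  have hinj : InjOn Prod.fst E := by
    rintro ⟨x, y⟩ ⟨hy, hyS, hx⟩ ⟨x', z⟩ ⟨hz, hzS, -⟩ (rfl : x = x')
    simp only [mem_iInter, mem_ofPred_eq, mem_preimage, mem_compl_iff] at hyS hzS hx
    have hcard := ((hfin x).le_ncard_iff_exists_strictMono k).2 ⟨y, hy, hyS⟩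
    exact congrArg (Prod.mk x) ((hfin x).strictMono_eq_of_ncard_eq (by omega) hy hz hyS hzS)
  have hsplit : {x | k ≤ {t | (x, t) ∈ S}.ncard} =
      Prod.fst '' E ∪ {x | k + 1 ≤ {t | (x, t) ∈ S}.ncard} := by
    ext x
    by_cases hx : k + 1 ≤ {t | (x, t) ∈ S}.ncard
    · simp only [mem_ofPred_eq, mem_union, hx, or_true, iff_true]; omega
    · simp only [mem_ofPred_eq, mem_union, hx, or_false, (hfin x).le_ncard_iff_exists_strictMono]
      constructor
      · rintro ⟨y, hy, hyS⟩
        exact ⟨(x, y), ⟨hy, mem_iInter.2 hyS, hx⟩, rfl⟩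
      · rintro ⟨⟨x, y⟩, ⟨hy, hyS, -⟩, rfl⟩
        exact ⟨y, hy, mem_iInter.1 hyS⟩
  rw [hsplit]
  exact (hE.image_of_measurable_injOn measurable_fst hinj).union hk

theorem measurableSet_setOf_le_ncard {S : Set (X × ℝ)} (hS : MeasurableSet S)
    (hfin : ∀ x, {t | (x, t) ∈ S}.Finite) {D : ℕ} (hD : ∀ x, {t | (x, t) ∈ S}.ncard ≤ D)
    (k : ℕ) : MeasurableSet {x | k ≤ {t | (x, t) ∈ S}.ncard} := by
  induction h : D + 1 - k generalizing k with
  | zero =>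
    convert MeasurableSet.empty
    refine eq_empty_of_forall_notMem fun x (hx : k ≤ _) => ?_
    have := hD x
    omega
  | succ j ih => exact measurableSet_setOf_le_ncard_of_succ hS hfin (ih (k + 1) (by omega))

theorem measurableSet_setOf_exists_of_ncard_le {Y : Type*} [MeasurableSpace Y]
    [StandardBorelSpace Y] {S : Set (X × Y)} (hS : MeasurableSet S)
    (hfin : ∀ x, {y | (x, y) ∈ S}.Finite) {D : ℕ} (hD : ∀ x, {y | (x, y) ∈ S}.ncard ≤ D) :
    MeasurableSet {x | ∃ y, (x, y) ∈ S} := by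
  obtain ⟨h, hh⟩ := MeasureTheory.exists_measurableEmbedding_real Y
  have hsec : ∀ x, {t | (x, t) ∈ Prod.map id h '' S} = h '' {y | (x, y) ∈ S} := by
    intro x; ext t; simp [Prod.map]
  have := measurableSet_setOf_le_ncard
    ((MeasurableEmbedding.id.prodMap hh).measurableSet_image' hS)
    (fun x => hsec x ▸ (hfin x).image h)
    (fun x => by rw [hsec, ncard_image_of_injective _ hh.injective]; exact hD x) 1
  convert this using 1
  ext x
  rw [mem_ofPred_eq, mem_ofPred_eq, hsec, ncard_image_of_injective _ hh.injective,
    Nat.one_le_iff_ne_zero, ← pos_iff_ne_zero, ncard_pos (hfin x)]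
  rfl

end SectionCount

noncomputable def greedyColor {I : Type*} (G : I → I → Prop) (ρ : I → ℕ) (x : I) : ℕ :=
  sInf {j | ∀ y, G x y → ρ y < ρ x → greedyColor G ρ y ≠ j}
termination_by ρ x
decreasing_by assumption

section Coloring

variable {I : Type*} {G : I → I → Prop} {ρ : I → ℕ} {D : ℕ}

theorem exists_le_forall_greedyColor_ne (hfin : ∀ x, {y | G x y}.Finite)
    (hdeg : ∀ x, {y | G x y}.ncard ≤ D) (x : I) :
    ∃ j ≤ D, ∀ y, G x y → ρ y < ρ x → greedyColor G ρ y ≠ j := by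
  have hlt : (greedyColor G ρ '' {y | G x y}).ncard < (Iic D).ncard := by
    rw [← Finset.coe_Iic, ncard_coe_finset, Nat.card_Iic]
    exact Nat.lt_succ_of_le ((ncard_image_le (hfin x)).trans (hdeg x))
  obtain ⟨j, hjD, hj⟩ := exists_mem_notMem_of_ncard_lt_ncard hlt ((hfin x).image _)
  exact ⟨j, hjD, fun y hxy _ hyj => hj ⟨y, hxy, hyj⟩⟩

theorem greedyColor_le (hfin : ∀ x, {y | G x y}.Finite) (hdeg : ∀ x, {y | G x y}.ncard ≤ D)
    (x : I) : greedyColor G ρ x ≤ D := by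
  obtain ⟨j, hjD, hj⟩ := exists_le_forall_greedyColor_ne (ρ := ρ) hfin hdeg x
  rw [greedyColor]
  refine (Nat.sInf_le ?_).trans hjD
  exact hj

theorem greedyColor_eq_iff (hfin : ∀ x, {y | G x y}.Finite) {x : I} {j : ℕ} :
    greedyColor G ρ x = j ↔ (∀ y, G x y → ρ y < ρ x → greedyColor G ρ y ≠ j) ∧
      ∀ i < j, ∃ y, G x y ∧ ρ y < ρ x ∧ greedyColor G ρ y = i := by
  set A := {j | ∀ y, G x y → ρ y < ρ x → greedyColor G ρ y ≠ j}
  have hA : A.Nonempty := by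
    obtain ⟨j, hj⟩ := ((hfin x).image (greedyColor G ρ)).exists_notMem
    exact ⟨j, fun y hxy _ hyj => hj ⟨y, hxy, hyj⟩⟩
  rw [greedyColor]
  constructor
  · rintro rfl
    refine ⟨Nat.sInf_mem hA, fun i hi => ?_⟩
    by_contra! h
    exact Nat.notMem_of_lt_sInf hi h
  · rintro ⟨hj, hlt⟩
    refine le_antisymm (Nat.sInf_le hj) (not_lt.1 fun h => ?_)
    obtain ⟨y, hxy, hρ, hy⟩ := hlt _ h
    exact Nat.sInf_mem hA y hxy hρ hy

theorem greedyColor_ne (hfin : ∀ x, {y | G x y}.Finite) {x y : I} (hxy : G x y)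
    (hρ : ρ y < ρ x) : greedyColor G ρ y ≠ greedyColor G ρ x :=
  (greedyColor_eq_iff hfin).1 rfl |>.1 y hxy hρ

end Coloring

section BorelColoring

variable {I : Type*} [MeasurableSpace I] [StandardBorelSpace I] {G : I → I → Prop} {D : ℕ}

theorem measurableSet_setOf_exists_adj_mem (hG : MeasurableSet {p : I × I | G p.1 p.2})
    (hfin : ∀ x, {y | G x y}.Finite) (hdeg : ∀ x, {y | G x y}.ncard ≤ D) {B : Set I}
    (hB : MeasurableSet B) : MeasurableSet {x | ∃ y, G x y ∧ y ∈ B} :=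
  measurableSet_setOf_exists_of_ncard_le (S := {p | G p.1 p.2 ∧ p.2 ∈ B})
    (hG.inter (measurable_snd hB)) (fun x => (hfin x).subset fun _ h => h.1)
    (fun x => (ncard_le_ncard (fun _ h => h.1) (hfin x)).trans (hdeg x))

theorem exists_measurable_nat_coloring (hirr : ∀ x, ¬ G x x)
    (hG : MeasurableSet {p : I × I | G p.1 p.2}) (hfin : ∀ x, {y | G x y}.Finite)
    (hdeg : ∀ x, {y | G x y}.ncard ≤ D) :
    ∃ ρ : I → ℕ, Measurable ρ ∧ ∀ x y, G x y → ρ x ≠ ρ y := by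
  classical
  have hadj (B : Set I) : MeasurableSet B → MeasurableSet {x | ∃ y, G x y ∧ y ∈ B} :=
    measurableSet_setOf_exists_adj_mem hG hfin hdeg
  obtain ⟨_, _, _⟩ := StandardBorelSpace.polish (α := I)
  obtain ⟨b, hbc, -, hb⟩ := TopologicalSpace.exists_countable_basis I
  obtain ⟨s, hs⟩ := (hbc.insert ∅).exists_eq_range (insert_nonempty _ _)
  have hsmeas : ∀ n, MeasurableSet (s n) := by
    intro n
    rcases (hs ▸ mem_range_self n : s n ∈ insert ∅ b) with h | h
    · exact h ▸ MeasurableSet.empty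
    · exact (hb.isOpen h).measurableSet
  have hgood : ∀ x, ∃ n, x ∈ s n \ {x | ∃ y, G x y ∧ y ∈ s n} := by
    intro x
    obtain ⟨u, hub, hxu, hu⟩ := hb.exists_subset_of_mem_open (show x ∈ {y | G x y}ᶜ from hirr x)
      (hfin x).isClosed.isOpen_compl
    obtain ⟨n, rfl⟩ : u ∈ range s := hs ▸ mem_insert_of_mem _ hub
    exact ⟨n, hxu, fun ⟨y, hxy, hy⟩ => hu hy hxy⟩
  refine ⟨fun x => Nat.find (hgood x),
    measurable_find hgood fun n => (hsmeas n).diff (hadj _ (hsmeas n)), fun x y hxy h => ?_⟩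
  have hx := Nat.find_spec (hgood x)
  rw [show Nat.find (hgood x) = Nat.find (hgood y) from h] at hx
  exact hx.2 ⟨y, hxy, (Nat.find_spec (hgood y)).1⟩

theorem measurable_greedyColor (hG : MeasurableSet {p : I × I | G p.1 p.2})
    (hfin : ∀ x, {y | G x y}.Finite) (hdeg : ∀ x, {y | G x y}.ncard ≤ D) {ρ : I → ℕ}
    (hρ : Measurable ρ) : Measurable (greedyColor G ρ) := by
  have hadj (B : Set I) : MeasurableSet B → MeasurableSet {x | ∃ y, G x y ∧ y ∈ B} :=
    measurableSet_setOf_exists_adj_mem hG hfin hdeg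
  have hlt : ∀ n j, MeasurableSet {y | ρ y < n ∧ greedyColor G ρ y = j} := by
    intro n
    induction n with
    | zero => simp
    | succ n ih =>
      intro j
      have hsucc : {y | ρ y < n + 1 ∧ greedyColor G ρ y = j} =
          {y | ρ y < n ∧ greedyColor G ρ y = j} ∪ (ρ ⁻¹' {n} ∩
            ({x | ∃ y, G x y ∧ y ∈ {y | ρ y < n ∧ greedyColor G ρ y = j}}ᶜ ∩
              ⋂ i ∈ Iio j, {x | ∃ y, G x y ∧ y ∈ {y | ρ y < n ∧ greedyColor G ρ y = i}})) := by
        ext x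
        rcases lt_trichotomy (ρ x) n with h | rfl | h
        · simp [h, h.le, h.ne]
        · simpa using greedyColor_eq_iff hfin
        · simp [h.ne', h.not_gt, not_le.2 h]
      rw [hsucc]
      exact (ih j).union ((hρ (measurableSet_singleton n)).inter
        ((hadj _ (ih j)).compl.inter (.biInter (to_countable _) fun i _ => hadj _ (ih i))))
  refine measurable_to_countable' fun j => ?_
  have : greedyColor G ρ ⁻¹' {j} = ⋃ n, {y | ρ y < n ∧ greedyColor G ρ y = j} := by
    ext x
    simp only [mem_preimage, mem_singleton_iff, mem_iUnion, mem_ofPred_eq]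
    exact ⟨fun h => ⟨ρ x + 1, Nat.lt_succ_self _, h⟩, fun ⟨_, _, h⟩ => h⟩
  rw [this]
  exact .iUnion fun n => hlt n j

theorem exists_measurable_fin_coloring (hsym : ∀ x y, G x y → G y x) (hirr : ∀ x, ¬ G x x)
    (hG : MeasurableSet {p : I × I | G p.1 p.2}) (hfin : ∀ x, {y | G x y}.Finite)
    (hdeg : ∀ x, {y | G x y}.ncard ≤ D) :
    ∃ c : I → Fin (D + 1), Measurable c ∧ ∀ x y, G x y → c x ≠ c y := by
  obtain ⟨ρ, hρ, hρG⟩ := exists_measurable_nat_coloring hirr hG hfin hdeg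
  refine ⟨fun x => ⟨greedyColor G ρ x, Nat.lt_succ_of_le (greedyColor_le hfin hdeg x)⟩,
    measurable_to_countable' fun k => ?_, fun x y hxy h => ?_⟩
  · convert measurable_greedyColor hG hfin hdeg hρ (measurableSet_singleton k.val) using 1
    ext x
    simp [Fin.ext_iff]
  · have h' : greedyColor G ρ x = greedyColor G ρ y := congrArg Fin.val h
    rcases (hρG x y hxy).lt_or_gt with hlt | hlt
    · exact greedyColor_ne hfin (hsym x y hxy) hlt h'
    · exact greedyColor_ne hfin hxy hlt h'.symm

end BorelColoring

theorem exists_injective_isCompact_range_of_countable (α : Type*) [Countable α] :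
    ∃ g : α → ℝ, Injective g ∧ IsCompact (range g) ∧ range g ⊆ Icc 0 1 := by
  set K : Set ℝ := insert 0 (range fun n : ℕ => 1 / ((n : ℝ) + 1))
  have hK : IsCompact K := tendsto_one_div_add_atTop_nhds_zero_nat.isCompact_insert_range
  have hK01 : K ⊆ Icc 0 1 := by
    rintro _ (rfl | ⟨n, rfl⟩)
    · exact ⟨le_rfl, zero_le_one⟩
    · exact ⟨by positivity, div_le_one_of_le₀ (by simp) (by positivity)⟩
  have : Countable K := ((countable_range _).insert 0).to_subtype
  have : Infinite K := by
    refine (infinite_range_of_injective fun m n h => ?_).mono (subset_insert _ _) |>.to_subtype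
    simpa using h
  suffices ∃ e : α → K, Injective e ∧ IsCompact (range ((↑) ∘ e : α → ℝ)) from
    let ⟨e, he, hc⟩ := this
    ⟨_, Subtype.val_injective.comp he, hc,
      range_comp_subset_range _ _ |>.trans (by simpa using hK01)⟩
  rcases finite_or_infinite α with hα | hα
  · obtain ⟨f, hf⟩ := Countable.exists_injective_nat α
    exact ⟨Infinite.natEmbedding K ∘ f, (Infinite.natEmbedding K).injective.comp hf,
      (finite_range _).isCompact⟩
  · obtain ⟨e⟩ := nonempty_equiv_of_countable (α := α) (β := K)
    refine ⟨e, e.injective, ?_⟩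
    rwa [range_comp, e.range_eq_univ, image_univ, Subtype.range_coe]

theorem exists_measurable_injective_isCompact_range (α : Type*) [MeasurableSpace α]
    [StandardBorelSpace α] :
    ∃ g : α → ℝ, Measurable g ∧ Injective g ∧ IsCompact (range g) ∧ range g ⊆ Icc 0 1 := by
  by_cases hα : Countable α
  · obtain ⟨g, hg, hK, hK01⟩ := exists_injective_isCompact_range_of_countable α
    exact ⟨g, measurable_of_countable g, hg, hK, hK01⟩
  · let e := (PolishSpace.measurableEquivNatBoolOfNotCountable hα).trans
      cantorSetHomeomorphNatToBool.symm.toMeasurableEquiv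
    have hrange : range ((↑) ∘ e : α → ℝ) = cantorSet := by
      rw [range_comp, e.surjective.range_eq, image_univ, Subtype.range_coe]
    refine ⟨(↑) ∘ e, measurable_subtype_coe.comp e.measurable,
      Subtype.val_injective.comp e.injective, ?_, ?_⟩
    · rw [hrange]; exact isCompact_cantorSet
    · rw [hrange]; exact cantorSet_subset_unitInterval

theorem exists_measurable_injOn_isCompact_image_fibers {I ι : Type*} [MeasurableSpace I]
    [StandardBorelSpace I] [Countable ι] [MeasurableSpace ι] [MeasurableSingletonClass ι]
    {c : I → ι} (hc : Measurable c) :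
    ∃ f : I → ℝ, Measurable f ∧ (∀ k, InjOn f (c ⁻¹' {k}) ∧ IsCompact (f '' (c ⁻¹' {k}))) ∧
      ∀ x, f x ∈ Icc 0 1 := by
  have hS : ∀ k, MeasurableSet (c ⁻¹' {k}) := fun k => hc (measurableSet_singleton k)
  have : ∀ k, StandardBorelSpace (c ⁻¹' {k}) := fun k => (hS k).standardBorel
  choose g hg hinj hK hK01 using
    fun k => exists_measurable_injective_isCompact_range (c ⁻¹' {k})
  let φ : ι → I → ℝ := fun k => extend (↑) (g k) 0
  have hφ : ∀ k x (hx : c x = k), φ (c x) x = g k ⟨x, hx⟩ := by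
    rintro k x rfl
    exact Subtype.val_injective.extend_apply (g (c x)) 0 ⟨x, rfl⟩
  refine ⟨fun x => φ (c x) x, ?_, fun k => ⟨fun x hx y hy hxy => ?_, ?_⟩, fun x => ?_⟩
  · have : Measurable fun p : I × ι => φ p.2 p.1 := measurable_from_prod_countable_left fun k =>
      (MeasurableEmbedding.subtype_coe (hS k)).measurable_extend (hg k) measurable_const
    exact this.comp (measurable_id.prodMk hc)
  · simp only [hφ k x hx, hφ k y hy] at hxy
    exact congrArg Subtype.val (hinj k hxy)
  · convert hK k using 1
    ext t
    exact ⟨fun ⟨x, hx, hxt⟩ => ⟨⟨x, hx⟩, (hφ k x hx).symm.trans hxt⟩,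
      fun ⟨⟨x, hx⟩, hxt⟩ => ⟨x, hx, (hφ k x hx).trans hxt⟩⟩
  · change φ (c x) x ∈ _
    rw [hφ (c x) x rfl]
    exact hK01 (c x) (mem_range_self _)

theorem exists_metricSpace_compactSpace_of_measurable_injective {I Y : Type*}
    [mI : MeasurableSpace I] [StandardBorelSpace I] [MetricSpace Y] [MeasurableSpace Y]
    [BorelSpace Y] [SecondCountableTopology Y] {F : I → Y} (hF : Measurable F)
    (hinj : Injective F) (hK : IsCompact (range F)) :
    ∃ m : MetricSpace I,
      @borel I m.toPseudoMetricSpace.toUniformSpace.toTopologicalSpace = mI ∧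
      @CompactSpace I m.toPseudoMetricSpace.toUniformSpace.toTopologicalSpace ∧
      ∀ x y, @dist I m.toPseudoMetricSpace.toDist x y = dist (F x) (F y) := by
  let m : MetricSpace I := .induced F hinj ‹_›
  have hind :
      @Topology.IsInducing I Y m.toPseudoMetricSpace.toUniformSpace.toTopologicalSpace _ F :=
    ⟨rfl⟩
  refine ⟨m, ?_, ?_, fun _ _ => rfl⟩
  · rw [hind.eq_induced, borel_comap, ← BorelSpace.measurable_eq,
      (hF.measurableEmbedding hinj).comap_eq]
  · rw [← isCompact_univ_iff, hind.isCompact_iff, image_univ]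
    exact hK

theorem dist_single_one_le {ι : Type*} [Fintype ι] [DecidableEq ι] (i j : ι) :
    dist (Pi.single i 1 : ι → ℝ) (Pi.single j 1) ≤ 1 := by
  rcases eq_or_ne i j with rfl | h
  · simp
  · simp [dist_single_single i j _ _ h]

theorem dist_single_one_of_ne {ι : Type*} [Fintype ι] [DecidableEq ι] {i j : ι} (h : i ≠ j) :
    dist (Pi.single i 1 : ι → ℝ) (Pi.single j 1) = 1 := by
  simp [dist_single_single i j _ _ h]

/-- every Borel graph with degrees at most `D` on a standard Borel space
carries a compact metric `d₀` generating the Borel sets, of diameter at most `1`,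
with `d₀(x,y) = 1` on every edge. -/
theorem stmt4 {I : Type*} [mI : MeasurableSpace I] [StandardBorelSpace I] (D : ℕ)
    (G : I → I → Prop) (hsym : Symmetric G) (hirr : Irreflexive G)
    (hGmeas : MeasurableSet {p : I × I | G p.1 p.2})
    (hfin : ∀ x : I, {y | G x y}.Finite) (hdeg : ∀ x : I, {y | G x y}.ncard ≤ D) :
    ∃ m : MetricSpace I,
      @borel I m.toPseudoMetricSpace.toUniformSpace.toTopologicalSpace = mI ∧
      @CompactSpace I m.toPseudoMetricSpace.toUniformSpace.toTopologicalSpace ∧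
      (∀ x y : I, @dist I m.toPseudoMetricSpace.toDist x y ≤ 1) ∧
      (∀ x y : I, G x y → @dist I m.toPseudoMetricSpace.toDist x y = 1) := by
  obtain ⟨c, hc, hcG⟩ := exists_measurable_fin_coloring hsym hirr hGmeas hfin hdeg
  obtain ⟨f, hf, hfc, hf01⟩ := exists_measurable_injOn_isCompact_image_fibers hc
  let F : I → (Fin (D + 1) → ℝ) × ℝ := fun x => (Pi.single (c x) 1, f x)
  have hFinj : Injective F := fun x y hxy => by
    have hcxy : c x = c y := by
      simpa [F, Pi.single_apply, eq_comm] using congrFun (congrArg Prod.fst hxy) (c x)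
    exact (hfc (c x)).1 rfl hcxy.symm (congrArg Prod.snd hxy)
  have hFrange : range F = ⋃ k, (fun t => (Pi.single k 1, t)) '' (f '' (c ⁻¹' {k})) := by
    ext p
    simp [F]
  have hF : Measurable F :=
    ((measurable_of_countable fun k : Fin (D + 1) => (Pi.single k 1 : _ → ℝ)).comp hc).prodMk hf
  obtain ⟨m, hborel, hcpt, hdist⟩ := exists_metricSpace_compactSpace_of_measurable_injective hF
    hFinj (hFrange ▸ isCompact_iUnion fun k => (hfc k).2.image (by fun_prop))
  refine ⟨m, hborel, hcpt, fun x y => ?_, fun x y hxy => ?_⟩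
  · rw [hdist, Prod.dist_eq]
    exact max_le (dist_single_one_le _ _) (Real.dist_le_of_mem_Icc_01 (hf01 x) (hf01 y))
  · simp only [hdist, Prod.dist_eq, F, dist_single_one_of_ne (hcG x y hxy)]
    exact max_eq_left (Real.dist_le_of_mem_Icc_01 (hf01 x) (hf01 y))
end

section
/- Let G be a bounded-degree graph on a compact metric space (I, d₀) of diameter 1, and let d be the neighborhood-isomorphism metric d(x,y) = inf over r and r-neighborhood isomorphisms φ of max{1/(r+1), d₀(φ)}. Then the completion (J, d) of (I, d) is a compact metric space. -/
/-!
Since `J` is complete and `I` is dense in it, it suffices that `(I, nbhdDist)` is totally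
bounded. Fix `ε > 0` and `r` with `1 / (r + 1) < ε`. Every ball `B(x, r)` has at most
`N = (D + 1) ^ r` vertices, so it can be listed as `e x : Fin N → I`, and the pattern of
adjacencies, coincidences and root positions of such a list takes only finitely many values.
Within one pattern class, `x ↦ e x` lands in the compact space `Fin N → I`, so finitely
many points of the class are `ε / 2`-close to all others; two lists with the same pattern
at sup-distance `≤ ε / 2` induce an `r`-neighborhood isomorphism of displacement `≤ ε / 2`,
hence `nbhdDist < ε`.
-/

open MeasureTheory

theorem Set.Finite.exists_fin_range_eq {α : Type*} {s : Set α} (hs : s.Finite)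
    (hne : s.Nonempty) {N : ℕ} (hN : s.ncard ≤ N) : ∃ e : Fin N → α, Set.range e = s := by
  have := hs.to_subtype
  have := hne.to_subtype
  let g : s → Fin N := Fin.castLE (by rwa [Nat.card_coe_set_eq]) ∘ Finite.equivFin s
  have hg : g.Injective := (Fin.castLE_injective _).comp (Finite.equivFin s).injective
  exact ⟨(↑) ∘ Function.invFun g, by
    rw [(Function.invFun_surjective hg).range_comp, Subtype.range_coe]⟩

theorem exists_finite_net_of_finite_coloring {X κ Y : Type*} [Finite κ] [PseudoMetricSpace Y]
    [CompactSpace Y] (c : X → κ) (g : X → Y) {δ : ℝ} (hδ : 0 < δ) :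
    ∃ t : Set X, t.Finite ∧ ∀ x, ∃ y ∈ t, c y = c x ∧ dist (g x) (g y) < δ := by
  have hnet : ∀ k, ∃ t ⊆ {x | c x = k}, t.Finite ∧
      ∀ x, c x = k → ∃ y ∈ t, dist (g x) (g y) < δ := by
    intro k
    obtain ⟨s, hsub, hsfin, hcover⟩ := Metric.finite_approx_of_totallyBounded
      (isCompact_univ.totallyBounded.subset (Set.subset_univ (g '' {x | c x = k}))) δ hδ
    obtain ⟨t, htk, htfin, rfl⟩ := Set.exists_subset_image_finite_and.1 ⟨s, hsub, hsfin, rfl⟩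
    refine ⟨t, htk, htfin, fun x hx => ?_⟩
    simpa using hcover (Set.mem_image_of_mem g hx)
  choose t htk htfin hcover using hnet
  refine ⟨⋃ k, t k, Set.finite_iUnion htfin, fun x => ?_⟩
  obtain ⟨y, hyt, hxy⟩ := hcover (c x) x rfl
  exact ⟨y, Set.mem_iUnion_of_mem _ hyt, htk _ hyt, hxy⟩

section NbhdDist

variable {I : Type*} (G : I → I → Prop)

theorem mem_gball_self (x : I) : ∀ r, x ∈ gball G x r
  | 0 => Set.mem_singleton x
  | r + 1 => Set.mem_union_left _ (mem_gball_self x r)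

theorem ncard_neighbors_le {D : ℕ} (hdeg : ∀ x : I, {y | G x y}.ncard ≤ D) {B : Set I}
    (hB : B.Finite) : {z | ∃ w ∈ B, G w z}.ncard ≤ B.ncard * D := by
  have hU : {z | ∃ w ∈ B, G w z} = ⋃ w ∈ hB.toFinset, {z | G w z} := by ext; simp
  rw [hU, Set.ncard_eq_toFinset_card B hB, ← smul_eq_mul]
  exact (Finset.set_ncard_biUnion_le _ _).trans
    (Finset.sum_le_card_nsmul _ _ _ fun w _ => hdeg w)

theorem gball_finite (hfin : ∀ x : I, {y | G x y}.Finite) (x : I) :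
    ∀ r, (gball G x r).Finite
  | 0 => Set.finite_singleton x
  | r + 1 => by
    have hB := gball_finite hfin x r
    have hU : {z | ∃ w ∈ gball G x r, G w z} = ⋃ w ∈ gball G x r, {z | G w z} := by ext; simp
    exact hB.union (hU ▸ hB.biUnion fun w _ => hfin w)

theorem ncard_gball_le (hfin : ∀ x : I, {y | G x y}.Finite) {D : ℕ}
    (hdeg : ∀ x : I, {y | G x y}.ncard ≤ D) (x : I) : ∀ r, (gball G x r).ncard ≤ (D + 1) ^ r
  | 0 => by simp [gball]
  | r + 1 =>
    calc (gball G x (r + 1)).ncard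
        ≤ (gball G x r).ncard + {z | ∃ w ∈ gball G x r, G w z}.ncard := Set.ncard_union_le _ _
      _ ≤ (gball G x r).ncard + (gball G x r).ncard * D :=
          Nat.add_le_add_left (ncard_neighbors_le G hdeg (gball_finite G hfin x r)) _
      _ = (gball G x r).ncard * (D + 1) := by ring
      _ ≤ (D + 1) ^ (r + 1) := by
          rw [pow_succ]
          exact Nat.mul_le_mul_right _ (ncard_gball_le hfin hdeg x r)

def listPattern {ι : Type*} (x : I) (e : ι → I) : (ι → ι → Prop) × (ι → ι → Prop) × (ι → Prop) :=
  (fun i j => G (e i) (e j), fun i j => e i = e j, fun i => e i = x)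

variable {G} {ι : Type*} {r : ℕ} {x y : I} {ex ey : ι → I}

theorem extend_apply_of_listPattern_eq (h : listPattern G x ex = listPattern G y ey) (i : ι) :
    Function.extend ex ey id (ex i) = ey i :=
  Function.FactorsThrough.extend_apply
    (fun i j hij => cast (congrFun₂ (congrArg (·.2.1) h) i j) hij) id i

theorem isNbhdIso_extend (hx : Set.range ex = gball G x r) (hy : Set.range ey = gball G y r)
    (h : listPattern G x ex = listPattern G y ey) :
    IsNbhdIso G r x y (Function.extend ex ey id) := by
  have hφ := extend_apply_of_listPattern_eq h
  have hA := congrFun₂ (congrArg (·.1) h)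
  have hE := congrFun₂ (congrArg (·.2.1) h)
  obtain ⟨i, hi⟩ : x ∈ Set.range ex := hx ▸ mem_gball_self G x r
  unfold IsNbhdIso
  rw [← hx, ← hy]
  refine ⟨?_, ⟨?_, ?_, ?_⟩, ?_⟩
  · rw [← hi, hφ]
    exact cast (congrFun (congrArg (·.2.2) h) i) hi
  · rintro _ ⟨i, rfl⟩
    exact ⟨i, (hφ i).symm⟩
  · rintro _ ⟨i, rfl⟩ _ ⟨j, rfl⟩ hij
    rw [hφ, hφ] at hij
    exact cast (hE i j).symm hij
  · rintro _ ⟨j, rfl⟩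
    exact ⟨ex j, ⟨j, rfl⟩, hφ j⟩
  · rintro _ ⟨i, rfl⟩ _ ⟨j, rfl⟩
    rw [hφ, hφ]
    exact Iff.of_eq (hA i j)

variable [MetricSpace I]

theorem nbhdDist_le_of_isNbhdIso {φ : I → I} (h : IsNbhdIso G r x y φ) :
    nbhdDist G x y ≤ max (1 / ((r : ℝ) + 1)) (disp G x r φ) := by
  refine csInf_le ⟨0, ?_⟩ ⟨r, φ, h, rfl⟩
  rintro _ ⟨r', φ', -, rfl⟩
  exact (by positivity : (0 : ℝ) ≤ 1 / ((r' : ℝ) + 1)).trans (le_max_left _ _)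

theorem nbhdDist_le_of_listPattern_eq (hx : Set.range ex = gball G x r)
    (hy : Set.range ey = gball G y r) (h : listPattern G x ex = listPattern G y ey) {δ : ℝ}
    (hδ : 0 ≤ δ) (hdist : ∀ i, dist (ex i) (ey i) ≤ δ) :
    nbhdDist G x y ≤ max (1 / ((r : ℝ) + 1)) δ := by
  refine (nbhdDist_le_of_isNbhdIso (isNbhdIso_extend hx hy h)).trans
    (max_le_max le_rfl (Real.iSup_le (fun z => ?_) hδ))
  obtain ⟨i, hi⟩ : (z : I) ∈ Set.range ex := hx.symm ▸ z.2
  rw [← hi, extend_apply_of_listPattern_eq h]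
  exact hdist i

theorem exists_finite_nbhdDist_net [CompactSpace I] (hfin : ∀ x : I, {y | G x y}.Finite)
    {D : ℕ} (hdeg : ∀ x : I, {y | G x y}.ncard ≤ D) {ε : ℝ} (hε : 0 < ε) :
    ∃ t : Set I, t.Finite ∧ ∀ x, ∃ y ∈ t, nbhdDist G x y < ε := by
  obtain ⟨r, hr⟩ := exists_nat_one_div_lt hε
  have hlist : ∀ x, ∃ e : Fin ((D + 1) ^ r) → I, Set.range e = gball G x r := fun x =>
    (gball_finite G hfin x r).exists_fin_range_eq ⟨x, mem_gball_self G x r⟩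
      (ncard_gball_le G hfin hdeg x r)
  choose e he using hlist
  obtain ⟨t, htfin, hnet⟩ :=
    exists_finite_net_of_finite_coloring (fun x => listPattern G x (e x)) e (half_pos hε)
  refine ⟨t, htfin, fun x => ?_⟩
  obtain ⟨y, hyt, hpat, hxy⟩ := hnet x
  refine ⟨y, hyt, lt_of_le_of_lt ?_ (max_lt hr (half_lt_self hε))⟩
  exact nbhdDist_le_of_listPattern_eq (he x) (he y) hpat.symm (half_pos hε).le
    fun i => (dist_le_pi_dist _ _ i).trans hxy.le

end NbhdDist

theorem stmt5_general {I : Type*} [MetricSpace I] [CompactSpace I]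
    (G : I → I → Prop)
    (D : ℕ) (hfin : ∀ x : I, {y | G x y}.Finite) (hdeg : ∀ x : I, {y | G x y}.ncard ≤ D)
    (J : Type*) [MetricSpace J] [CompleteSpace J] (f : I → J)
    (hiso : ∀ x y : I, dist (f x) (f y) = nbhdDist G x y)
    (hdense : DenseRange f) :
    CompactSpace J := by
  have hTB : TotallyBounded (Set.range f) := Metric.totallyBounded_iff.2 fun ε hε => by
    obtain ⟨t, htfin, hnet⟩ := exists_finite_nbhdDist_net hfin hdeg hε
    refine ⟨f '' t, htfin.image f, ?_⟩
    rintro _ ⟨x, rfl⟩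
    obtain ⟨y, hyt, hxy⟩ := hnet x
    exact Set.mem_biUnion (Set.mem_image_of_mem f hyt) (by rwa [Metric.mem_ball, hiso])
  refine ⟨isCompact_iff_totallyBounded_isComplete.2 ⟨?_, isComplete_univ⟩⟩
  simpa only [hdense.closure_range] using hTB.closure

/-- the completion `(J,d)` of `(I, nbhdDist)` is compact, where `(I,d₀)` is a
compact metric space of diameter `1` and `G` has bounded degree. (The completion is
presented abstractly: a complete metric space `J` with an isometric dense embedding
of `(I, nbhdDist)`.) -/
theorem stmt5 {I : Type*} [MetricSpace I] [CompactSpace I] (hdiam : ∀ x y : I, dist x y ≤ 1)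
    (G : I → I → Prop) (hsym : Symmetric G) (hirr : Irreflexive G)
    (D : ℕ) (hfin : ∀ x : I, {y | G x y}.Finite) (hdeg : ∀ x : I, {y | G x y}.ncard ≤ D)
    (J : Type*) [MetricSpace J] [CompleteSpace J] (f : I → J)
    (hiso : ∀ x y : I, dist (f x) (f y) = nbhdDist G x y)
    (hdense : DenseRange f) :
    CompactSpace J :=
  stmt5_general G D hfin hdeg J f hiso hdense
end

section
/- A compact graphing satisfies a quantitative version of condition (C3): for every ε > 0, every integer r ≥ 0, and every pair of points x, y with d(x,y) ≤ ε/(1+rε), there exists an r-neighborhood isomorphism φ between x and y with max_{z∈B(x,r)} d(z,φ(z)) ≤ ε, when d is the neighborhood-isomorphism metric on the completion. -/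
open MeasureTheory

section Aux

variable {I : Type*}

lemma self_mem_gball (G : I → I → Prop) (x : I) : ∀ r, x ∈ gball G x r
  | 0 => by simp [gball]
  | r + 1 => Or.inl (self_mem_gball G x r)

lemma gball_subset_succ (G : I → I → Prop) (x : I) (r : ℕ) :
    gball G x r ⊆ gball G x (r + 1) := Set.subset_union_left

lemma gball_mono (G : I → I → Prop) (x : I) {r s : ℕ} (h : r ≤ s) :
    gball G x r ⊆ gball G x s := by
  induction s with
  | zero => simp [Nat.le_zero.mp h]
  | succ n ih =>
    rcases Nat.lt_or_ge r (n + 1) with h' | h'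
    · exact (ih (Nat.lt_succ_iff.mp h')).trans (gball_subset_succ G x n)
    · have : r = n + 1 := le_antisymm h h'
      subst this; exact subset_rfl

lemma gball_add (G : I → I → Prop) {x z : I} {r : ℕ} (hz : z ∈ gball G x r) :
    ∀ s, gball G z s ⊆ gball G x (r + s)
  | 0 => by
    intro u hu
    simp [gball] at hu
    subst hu; exact hz
  | s + 1 => by
    intro u hu
    rcases hu with hu | ⟨w, hw, hwu⟩
    · exact gball_subset_succ G x (r + s) (gball_add G hz s hu)
    · exact Or.inr ⟨w, gball_add G hz s hw, hwu⟩

lemma transport (G : I → I → Prop) {x y : I} {R : ℕ} {ψ : I → I}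
    (hψ : IsNbhdIso G R x y ψ) :
    ∀ (s : ℕ) (a : I), gball G a s ⊆ gball G x R → gball G (ψ a) s ⊆ gball G y R →
      Set.MapsTo ψ (gball G a s) (gball G (ψ a) s) ∧
      Set.SurjOn ψ (gball G a s) (gball G (ψ a) s) := by
  obtain ⟨hxy, hbij, hadj⟩ := hψ
  intro s
  induction s with
  | zero =>
    intro a _ _
    constructor
    · intro z hz
      simp [gball] at hz ⊢
      rw [hz]
    · intro z hz
      simp [gball] at hz ⊢
      rw [hz]
  | succ n ih =>
    intro a hsub hsub'
    have hsubn : gball G a n ⊆ gball G x R := (gball_subset_succ G a n).trans hsub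
    have hsubn' : gball G (ψ a) n ⊆ gball G y R := (gball_subset_succ G (ψ a) n).trans hsub'
    obtain ⟨hmap, hsurj⟩ := ih a hsubn hsubn'
    constructor
    · rintro z (hz | ⟨w, hw, hwz⟩)
      · exact Or.inl (hmap hz)
      · refine Or.inr ⟨ψ w, hmap hw, ?_⟩
        exact (hadj w (hsubn hw) z (hsub (Or.inr ⟨w, hw, hwz⟩))).mp hwz
    · rintro z' (hz' | ⟨w', hw', hwz'⟩)
      · exact (hsurj hz').imp fun z hz => ⟨Or.inl hz.1, hz.2⟩
      · obtain ⟨w, hw, rfl⟩ := hsurj hw'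
        have hz'R : z' ∈ gball G y R := hsub' (Or.inr ⟨ψ w, hw', hwz'⟩)
        obtain ⟨z, hzR, rfl⟩ := hbij.surjOn hz'R
        have : G w z := (hadj w (hsubn hw) z hzR).mpr hwz'
        exact ⟨z, Or.inr ⟨w, hw, this⟩, rfl⟩

lemma iso_of_subset (G : I → I → Prop) {x y : I} {R : ℕ} {ψ : I → I}
    (hψ : IsNbhdIso G R x y ψ) {s : ℕ} {a : I}
    (hsub : gball G a s ⊆ gball G x R) (hsub' : gball G (ψ a) s ⊆ gball G y R) :
    IsNbhdIso G s a (ψ a) ψ := by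
  obtain ⟨hmap, hsurj⟩ := transport G hψ s a hsub hsub'
  exact ⟨rfl, ⟨hmap, hψ.2.1.injOn.mono hsub, hsurj⟩,
    fun u hu v hv => hψ.2.2 u (hsub hu) v (hsub hv)⟩

lemma iso_zero (G : I → I → Prop) (hirr : Irreflexive G) (x y : I) :
    IsNbhdIso G 0 x y (fun _ => y) := by
  refine ⟨rfl, ⟨?_, ?_, ?_⟩, ?_⟩
  · intro z hz; simp [gball]
  · intro u hu v hv _
    simp [gball] at hu hv
    rw [hu, hv]
  · intro z hz
    simp [gball] at hz ⊢
    exact hz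
  · intro u hu v hv
    simp only [gball, Set.mem_singleton_iff] at hu hv
    rw [hu, hv]
    exact iff_of_false (hirr x) (hirr y)

variable [MetricSpace I]

lemma nbhdDist_le (G : I → I → Prop) {x y : I} {r : ℕ} {φ : I → I}
    (hφ : IsNbhdIso G r x y φ) :
    nbhdDist G x y ≤ max (1 / ((r : ℝ) + 1)) (disp G x r φ) := by
  apply csInf_le
  · refine ⟨0, ?_⟩
    rintro m ⟨n, ψ, -, rfl⟩
    exact le_max_of_le_left (by positivity)
  · exact ⟨r, φ, hφ, rfl⟩

lemma disp_le_of_subset (hdiam : ∀ a b : I, dist a b ≤ 1)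
    (G : I → I → Prop) {x z : I} {R s : ℕ} (ψ : I → I)
    (hsub : gball G z s ⊆ gball G x R) :
    disp G z s ψ ≤ disp G x R ψ := by
  haveI : Nonempty (gball G z s) := ⟨⟨z, self_mem_gball G z s⟩⟩
  apply ciSup_le
  rintro ⟨w, hw⟩
  exact le_ciSup_of_le ⟨1, by rintro _ ⟨⟨u, hu⟩, rfl⟩; exact hdiam _ _⟩ ⟨w, hsub hw⟩ le_rfl

end Aux

/-- quantitative condition (C3): if `d(x,y) ≤ ε/(1 + rε)`, there is an
`r`-neighborhood isomorphism `φ` between `x` and `y` with `d(z, φ(z)) ≤ ε` for all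
`z ∈ B(x,r)`, where `d` is the neighborhood-isomorphism metric. -/

theorem stmt8 {I : Type*} [MetricSpace I] (hdiam : ∀ x y : I, dist x y ≤ 1)
    (G : I → I → Prop) (hsym : Symmetric G) (hirr : Irreflexive G)
    (D : ℕ) (hfin : ∀ x : I, {y | G x y}.Finite) (hdeg : ∀ x : I, {y | G x y}.ncard ≤ D)
    (ε : ℝ) (hε : 0 < ε) (r : ℕ) (x y : I)
    (h : nbhdDist G x y ≤ ε / (1 + r * ε)) :
    ∃ φ : I → I, IsNbhdIso G r x y φ ∧ ∀ z ∈ gball G x r, nbhdDist G z (φ z) ≤ ε := by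
  rcases Nat.eq_zero_or_pos r with rfl | hr
  · refine ⟨fun _ => y, iso_zero G hirr x y, ?_⟩
    intro z hz
    simp only [gball, Set.mem_singleton_iff] at hz
    subst hz
    simpa using h
  · -- setup of constants
    set c : ℕ := ⌈1 / ε⌉₊ with hc
    have hc1 : 1 ≤ c := Nat.one_le_iff_ne_zero.mpr (by
      simp [hc, Nat.ceil_eq_zero, not_le]
      positivity)
    set K : ℕ := r + c - 1 with hKdef
    have hK0 : 0 < K := by omega
    have hKcast : (K : ℝ) = (r : ℝ) + (c : ℝ) - 1 := by
      have : K + 1 = r + c := by omega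
      have := congrArg (fun n : ℕ => (n : ℝ)) this
      push_cast at this
      linarith
    have hclt : (c : ℝ) < 1 / ε + 1 := Nat.ceil_lt_add_one (by positivity)
    have hKlt : (K : ℝ) < (r : ℝ) + 1 / ε := by rw [hKcast]; linarith
    have h1rε : (0 : ℝ) < 1 + r * ε := by positivity
    have ht_eq : ε / (1 + r * ε) = 1 / ((r : ℝ) + 1 / ε) := by
      rw [div_eq_div_iff h1rε.ne' (by positivity : (0:ℝ) < (r : ℝ) + 1 / ε).ne']
      field_simp
      ring
    have htK : ε / (1 + r * ε) < 1 / (K : ℝ) := by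
      rw [ht_eq]
      apply one_div_lt_one_div_of_lt
      · exact_mod_cast hK0
      · exact hKlt
    have htε : ε / (1 + r * ε) < ε := by
      rw [div_lt_iff₀ h1rε]
      have hr1 : (1 : ℝ) ≤ (r : ℝ) := by exact_mod_cast hr
      nlinarith [mul_pos hε hε]
    -- extract a good witness
    have hSne : {m | ∃ (n : ℕ) (φ : I → I), IsNbhdIso G n x y φ ∧
        m = max (1 / ((n : ℝ) + 1)) (disp G x n φ)}.Nonempty :=
      ⟨_, 0, fun _ => y, iso_zero G hirr x y, rfl⟩
    obtain ⟨m, hm, hmlt⟩ := exists_lt_of_csInf_lt hSne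
      (lt_of_le_of_lt h (lt_min htε htK))
    obtain ⟨R, ψ, hψ, rfl⟩ := hm
    have h1 : 1 / ((R : ℝ) + 1) < 1 / (K : ℝ) :=
      (le_max_left _ _).trans_lt (hmlt.trans_le (min_le_right _ _))
    have hd : disp G x R ψ < ε :=
      (le_max_right _ _).trans_lt (hmlt.trans_le (min_le_left _ _))
    have hKR : (K : ℝ) < (R : ℝ) + 1 := by
      have hR1 : (0 : ℝ) < (R : ℝ) + 1 := by positivity
      by_contra hcon
      push_neg at hcon
      have : 1 / ((R : ℝ) + 1) ≥ 1 / (K : ℝ) :=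
        one_div_le_one_div_of_le hR1 hcon
      linarith
    have hKRn : K ≤ R := by exact_mod_cast Nat.lt_succ_iff.mp (by exact_mod_cast hKR)
    have hrR : r ≤ R := by omega
    have hcRr : c ≤ R - r + 1 := by omega
    have hεRr : 1 / (((R - r : ℕ) : ℝ) + 1) ≤ ε := by
      have h1ε : 1 / ε ≤ ((R - r : ℕ) : ℝ) + 1 := by
        refine (Nat.le_ceil _).trans ?_
        have : ((c : ℕ) : ℝ) ≤ ((R - r + 1 : ℕ) : ℝ) := by exact_mod_cast hcRr
        push_cast at this ⊢
        linarith
      calc 1 / (((R - r : ℕ) : ℝ) + 1) ≤ 1 / (1 / ε) :=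
            one_div_le_one_div_of_le (by positivity) h1ε
        _ = ε := one_div_one_div ε
    -- transport ψ
    have hsubxr : gball G x r ⊆ gball G x R := gball_mono G x hrR
    have hsubyr : gball G (ψ x) r ⊆ gball G y R := by
      rw [hψ.1]; exact gball_mono G y hrR
    have hisor : IsNbhdIso G r x y ψ := by
      have := iso_of_subset G hψ hsubxr hsubyr
      rwa [hψ.1] at this
    refine ⟨ψ, hisor, ?_⟩
    intro z hz
    have hzy : ψ z ∈ gball G y r := hisor.2.1.mapsTo hz
    have hsub1 : gball G z (R - r) ⊆ gball G x R := by
      have := gball_add G hz (R - r)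
      rwa [Nat.add_sub_cancel' hrR] at this
    have hsub2 : gball G (ψ z) (R - r) ⊆ gball G y R := by
      have := gball_add G hzy (R - r)
      rwa [Nat.add_sub_cancel' hrR] at this
    have hisoz : IsNbhdIso G (R - r) z (ψ z) ψ := iso_of_subset G hψ hsub1 hsub2
    refine (nbhdDist_le G hisoz).trans (max_le hεRr ?_)
    exact ((disp_le_of_subset hdiam G ψ hsub1).trans hd.le)
end
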